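/- arXiv:2305.09029 — 4 statements merged into one kernel-verified Lean document; each statement's English description precedes it below -/
import Mathlib

section
/- For every integer m ≥ 2, every real μ ≥ 0, and all real α, β > 0, Σ_{k=1}^{m−1} [ (μ+α)_{2k}(μ+β)_{2(m−k)} − (μ)_{2k}(μ+α+β)_{2(m−k)} ] / ( (2k−1)! (2(m−k)−1)! ) > 0. Equivalently, the function ψ̃(μ;x) = Σ_{n≥1} (μ)_{2n} x^n/(2n−1)! is coefficient-wise log-concave in μ with strictly positive Turánian coefficients. -/
/-!
Write `U c = (1 - X) ^ (-c) = ∑ (c)ₙ Xⁿ / n!` and `D c = U c (X) - U c (-X)`. Since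
`(c)_{2k} / (2k-1)! = c (c+1)_{2k-1} / (2k-1)!`, the sum is a quarter of the coefficient of
`X ^ (2m-2)` in `(μ+α)(μ+β) D(ν+α) D(ν+β) - μ(μ+α+β) D ν D(ν+α+β)`, where `ν = μ + 1`.
The exponential law `U (a + b) = U a * U b` (Chu–Vandermonde) turns
`D(ν+α) D(ν+β) - D ν D(ν+α+β)` into `(1 - X²) ^ (-ν) * D α * D β`, a series with nonnegative
coefficients. Splitting `(μ+α)(μ+β) = μ(μ+α+β) + αβ` leaves `αβ` times a coefficient of
`D(ν+α) D(ν+β)`, which is positive.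
-/

/-- The rising factorial (Pochhammer symbol) `(μ)_n = μ(μ+1)⋯(μ+n−1)`. -/
noncomputable def risingFactorial (μ : ℝ) : ℕ → ℝ
  | 0 => 1
  | n + 1 => risingFactorial μ n * (μ + n)

open Finset

theorem risingFactorial_eq_eval (c : ℝ) (n : ℕ) :
    risingFactorial c n = (ascPochhammer ℝ n).eval c := by
  induction n with
  | zero => simp [risingFactorial]
  | succ n ih => rw [risingFactorial, ih, ascPochhammer_succ_eval]

theorem risingFactorial_succ_left (c : ℝ) (n : ℕ) :
    risingFactorial c (n + 1) = c * risingFactorial (c + 1) n := by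
  simp [risingFactorial_eq_eval, ascPochhammer_succ_left]

theorem risingFactorial_pos {c : ℝ} (hc : 0 < c) (n : ℕ) : 0 < risingFactorial c n := by
  rw [risingFactorial_eq_eval]
  exact ascPochhammer_pos n c hc

theorem descPochhammer_smeval_neg (c : ℝ) (n : ℕ) :
    (descPochhammer ℤ n).smeval (-c) = (-1) ^ n * risingFactorial c n := by
  rw [risingFactorial_eq_eval, ← Polynomial.ascPochhammer_smeval_eq_eval, ← neg_neg c,
    Polynomial.ascPochhammer_smeval_neg_eq_descPochhammer, neg_neg, Units.smul_def,
    zsmul_eq_mul, ← mul_assoc]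
  simp [← mul_pow]

theorem risingFactorial_add (c d : ℝ) (n : ℕ) :
    risingFactorial (c + d) n = ∑ ij ∈ antidiagonal n,
      n.choose ij.1 * (risingFactorial c ij.1 * risingFactorial d ij.2) := by
  have h := Ring.descPochhammer_smeval_add n (Commute.all (-c) (-d))
  rw [← neg_add, descPochhammer_smeval_neg] at h
  have h_sq : risingFactorial (c + d) n = (-1) ^ n * ((-1) ^ n * risingFactorial (c + d) n) := by
    rw [← mul_assoc, ← mul_pow]
    simp
  rw [h_sq, h, mul_sum]
  refine sum_congr rfl fun ij hij => ?_
  rw [descPochhammer_smeval_neg, descPochhammer_smeval_neg, ← mem_antidiagonal.mp hij]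
  ring_nf
  simp

namespace PowerSeries

section OrderedCoeffs

variable {R : Type*} [CommSemiring R] [PartialOrder R] {f g : R⟦X⟧}

theorem coeff_mul_nonneg [IsOrderedRing R] (hf : ∀ n, 0 ≤ coeff n f) (hg : ∀ n, 0 ≤ coeff n g)
    (n : ℕ) : 0 ≤ coeff n (f * g) := by
  rw [coeff_mul]
  exact sum_nonneg fun ij _ => mul_nonneg (hf ij.1) (hg ij.2)

theorem coeff_mul_pos [IsStrictOrderedRing R] (hf : ∀ n, 0 ≤ coeff n f) (hg : ∀ n, 0 ≤ coeff n g)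
    {i j : ℕ} (hi : 0 < coeff i f) (hj : 0 < coeff j g) : 0 < coeff (i + j) (f * g) := by
  rw [coeff_mul]
  exact sum_pos' (fun ij _ => mul_nonneg (hf ij.1) (hg ij.2))
    ⟨(i, j), mem_antidiagonal.mpr rfl, mul_pos hi hj⟩

end OrderedCoeffs

theorem coeff_mul_of_even_coeff_eq_zero {R : Type*} [CommSemiring R] {f g : R⟦X⟧}
    (hf : ∀ n, Even n → coeff n f = 0) (m : ℕ) :
    coeff (2 * m - 2) (f * g) =
      ∑ k ∈ Icc 1 (m - 1), coeff (2 * k - 1) f * coeff (2 * (m - k) - 1) g := by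
  rw [coeff_mul, Nat.sum_antidiagonal_eq_sum_range_succ_mk,
    ← sum_filter_of_ne (p := fun i => ¬ Even i) fun i _ hne hi => hne (by rw [hf i hi, zero_mul])]
  refine sum_nbij' (fun i => (i + 1) / 2) (fun k => 2 * k - 1) ?_ ?_ ?_ ?_ ?_
  · simp only [mem_filter, mem_range, Nat.not_even_iff, mem_Icc]
    omega
  · simp only [mem_filter, mem_range, Nat.not_even_iff, mem_Icc]
    omega
  · simp only [mem_filter, mem_range, Nat.not_even_iff]
    omega
  · simp only [mem_Icc]
    omega
  · intro i hi
    simp only [mem_filter, mem_range, Nat.not_even_iff] at hi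
    rw [show 2 * ((i + 1) / 2) - 1 = i by omega,
      show 2 * (m - (i + 1) / 2) - 1 = 2 * m - 2 - i by omega]

theorem rescale_C {R : Type*} [CommSemiring R] (a r : R) : rescale a (C r) = C r := by
  ext n
  rw [coeff_rescale, coeff_C]
  split_ifs with h <;> simp [h]

theorem derivative_rescale {R : Type*} [CommRing R] (a : R) (f : R⟦X⟧) :
    d⁄dX R (rescale a f) = C a * rescale a (d⁄dX R f) := by
  ext n
  rw [coeff_derivative, coeff_rescale, coeff_C_mul, coeff_rescale, coeff_derivative, pow_succ]
  ring

theorem coeff_nonneg_of_one_sub_X_sq_mul_derivative {f : ℝ⟦X⟧} {a : ℝ}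
    (hf : (1 - X ^ 2) * d⁄dX ℝ f = C a * X * f) (ha : 0 ≤ a) (h0 : 0 ≤ coeff 0 f) :
    ∀ n, 0 ≤ coeff n f := by
  have hcoeff (n : ℕ) := congrArg (coeff n) hf
  simp only [sub_mul, one_mul, map_sub, mul_assoc, coeff_C_mul, coeff_derivative] at hcoeff
  have h1 : coeff 1 f = 0 := by simpa using hcoeff 0
  have hrec (n : ℕ) : (n + 2) * coeff (n + 2) f = (n + a) * coeff n f := by
    have h := hcoeff (n + 1)
    rw [coeff_succ_X_mul] at h
    rcases n with _ | n
    · rw [coeff_X_pow_mul', if_neg (by norm_num)] at h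
      push_cast at h ⊢
      linarith
    · rw [coeff_X_pow_mul', if_pos (by omega), show n + 1 + 1 - 2 = n by omega,
        coeff_derivative] at h
      push_cast at h ⊢
      linarith
  intro n
  induction n using Nat.twoStepInduction with
  | zero => exact h0
  | one => exact h1.ge
  | more n ih _ =>
    refine (mul_nonneg_iff_of_pos_left (by positivity : (0 : ℝ) < n + 2)).mp ?_
    rw [hrec]
    exact mul_nonneg (by positivity) ih

/-- `(1 - X) ^ (-c)` -/
noncomputable def risingSeries (c : ℝ) : ℝ⟦X⟧ :=
  mk fun n => risingFactorial c n / n.factorial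

/-- `(1 - X) ^ (-c) - (1 + X) ^ (-c)` -/
noncomputable def oddRisingSeries (c : ℝ) : ℝ⟦X⟧ :=
  risingSeries c - rescale (-1) (risingSeries c)

theorem coeff_risingSeries (c : ℝ) (n : ℕ) :
    coeff n (risingSeries c) = risingFactorial c n / n.factorial :=
  coeff_mk _ _

theorem risingSeries_add (c d : ℝ) : risingSeries (c + d) = risingSeries c * risingSeries d := by
  ext n
  rw [coeff_mul, coeff_risingSeries, risingFactorial_add, sum_div]
  refine sum_congr rfl fun ij hij => ?_
  obtain rfl := mem_antidiagonal.mp hij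
  rw [coeff_risingSeries, coeff_risingSeries, Nat.cast_add_choose]
  field_simp

theorem one_sub_X_mul_derivative_risingSeries (c : ℝ) :
    (1 - X) * d⁄dX ℝ (risingSeries c) = C c * risingSeries c := by
  ext n
  rw [sub_mul, one_mul, map_sub, coeff_C_mul, coeff_derivative, coeff_risingSeries,
    coeff_risingSeries, risingFactorial, Nat.factorial_succ]
  rcases n with _ | n
  · simp [mul_comm]
  · rw [coeff_succ_X_mul, coeff_derivative, coeff_risingSeries, Nat.factorial_succ]
    push_cast
    field_simp
    ring

theorem one_add_X_mul_derivative_rescale_risingSeries (c : ℝ) :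
    (1 + X) * d⁄dX ℝ (rescale (-1) (risingSeries c)) = -C c * rescale (-1) (risingSeries c) := by
  have h := congrArg (rescale (-1 : ℝ)) (one_sub_X_mul_derivative_risingSeries c)
  simp only [map_mul, map_sub, map_one, rescale_neg_one_X, rescale_C, sub_neg_eq_add] at h
  rw [derivative_rescale, map_neg, map_one]
  linear_combination -h

theorem one_sub_X_sq_mul_derivative_risingSeries_mul_rescale (c : ℝ) :
    (1 - X ^ 2) * d⁄dX ℝ (risingSeries c * rescale (-1) (risingSeries c)) =
      C (2 * c) * X * (risingSeries c * rescale (-1) (risingSeries c)) := by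
  rw [Derivation.leibniz, smul_eq_mul, smul_eq_mul, map_mul, map_ofNat]
  linear_combination (1 + X) * rescale (-1) (risingSeries c) *
      one_sub_X_mul_derivative_risingSeries c +
    (1 - X) * risingSeries c * one_add_X_mul_derivative_rescale_risingSeries c

theorem coeff_risingSeries_mul_rescale_nonneg {c : ℝ} (hc : 0 ≤ c) (n : ℕ) :
    0 ≤ coeff n (risingSeries c * rescale (-1) (risingSeries c)) :=
  coeff_nonneg_of_one_sub_X_sq_mul_derivative
    (one_sub_X_sq_mul_derivative_risingSeries_mul_rescale c) (by positivity)
    (by simp [coeff_mul, coeff_risingSeries, risingFactorial]) n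

theorem coeff_oddRisingSeries (c : ℝ) (n : ℕ) :
    coeff n (oddRisingSeries c) = (1 - (-1) ^ n) * (risingFactorial c n / n.factorial) := by
  rw [oddRisingSeries, map_sub, coeff_rescale, coeff_risingSeries]
  ring

theorem coeff_oddRisingSeries_of_even (c : ℝ) {n : ℕ} (hn : Even n) :
    coeff n (oddRisingSeries c) = 0 := by
  rw [coeff_oddRisingSeries, hn.neg_one_pow, sub_self, zero_mul]

theorem coeff_oddRisingSeries_of_odd (c : ℝ) {n : ℕ} (hn : Odd n) :
    coeff n (oddRisingSeries c) = 2 * (risingFactorial c n / n.factorial) := by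
  rw [coeff_oddRisingSeries, hn.neg_one_pow]
  norm_num

theorem coeff_oddRisingSeries_nonneg {c : ℝ} (hc : 0 < c) (n : ℕ) :
    0 ≤ coeff n (oddRisingSeries c) := by
  rcases n.even_or_odd with hn | hn
  · rw [coeff_oddRisingSeries_of_even c hn]
  · rw [coeff_oddRisingSeries_of_odd c hn]
    have := risingFactorial_pos hc n
    positivity

theorem coeff_oddRisingSeries_pos {c : ℝ} (hc : 0 < c) {n : ℕ} (hn : Odd n) :
    0 < coeff n (oddRisingSeries c) := by
  rw [coeff_oddRisingSeries_of_odd c hn]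
  have := risingFactorial_pos hc n
  positivity

theorem coeff_oddRisingSeries_mul_pos {c d : ℝ} (hc : 0 < c) (hd : 0 < d) {n : ℕ}
    (hn : Even n) (hn₀ : n ≠ 0) : 0 < coeff n (oddRisingSeries c * oddRisingSeries d) := by
  obtain ⟨k, rfl⟩ := hn
  have h := coeff_mul_pos (coeff_oddRisingSeries_nonneg hc) (coeff_oddRisingSeries_nonneg hd)
    (coeff_oddRisingSeries_pos hc odd_one) (coeff_oddRisingSeries_pos hd ⟨k - 1, rfl⟩)
  rwa [show 1 + (2 * (k - 1) + 1) = k + k by omega] at h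

theorem oddRisingSeries_mul_sub_oddRisingSeries_mul (ν α β : ℝ) :
    oddRisingSeries (ν + α) * oddRisingSeries (ν + β) -
        oddRisingSeries ν * oddRisingSeries (ν + α + β) =
      risingSeries ν * rescale (-1) (risingSeries ν) *
        (oddRisingSeries α * oddRisingSeries β) := by
  simp only [oddRisingSeries, risingSeries_add, map_mul]
  ring

theorem coeff_oddRisingSeries_mul_le {ν α β : ℝ} (hν : 0 ≤ ν) (hα : 0 < α) (hβ : 0 < β)
    (n : ℕ) :
    coeff n (oddRisingSeries ν * oddRisingSeries (ν + α + β)) ≤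
      coeff n (oddRisingSeries (ν + α) * oddRisingSeries (ν + β)) := by
  rw [← sub_nonneg, ← map_sub, oddRisingSeries_mul_sub_oddRisingSeries_mul]
  exact coeff_mul_nonneg (coeff_risingSeries_mul_rescale_nonneg hν)
    (coeff_mul_nonneg (coeff_oddRisingSeries_nonneg hα) (coeff_oddRisingSeries_nonneg hβ)) n

theorem mul_coeff_oddRisingSeries_add_one (c : ℝ) {n : ℕ} (hn : Odd n) :
    c * coeff n (oddRisingSeries (c + 1)) = 2 * (risingFactorial c (n + 1) / n.factorial) := by
  rw [coeff_oddRisingSeries_of_odd _ hn, risingFactorial_succ_left]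
  ring

theorem sum_risingFactorial_mul_risingFactorial_div (a b : ℝ) (m : ℕ) :
    ∑ k ∈ Icc 1 (m - 1), risingFactorial a (2 * k) * risingFactorial b (2 * (m - k)) /
        ((2 * k - 1).factorial * (2 * (m - k) - 1).factorial : ℝ) =
      a * b * coeff (2 * m - 2) (oddRisingSeries (a + 1) * oddRisingSeries (b + 1)) / 4 := by
  rw [coeff_mul_of_even_coeff_eq_zero fun n => coeff_oddRisingSeries_of_even _, mul_sum, sum_div]
  refine sum_congr rfl fun k hk => ?_
  rw [mem_Icc] at hk
  have ha := mul_coeff_oddRisingSeries_add_one a (n := 2 * k - 1) ⟨k - 1, by omega⟩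
  have hb := mul_coeff_oddRisingSeries_add_one b (n := 2 * (m - k) - 1) ⟨m - k - 1, by omega⟩
  rw [Nat.sub_add_cancel (by omega)] at ha hb
  rw [show ∀ x y : ℝ, a * b * (x * y) / 4 = a * x * (b * y) / 4 by intros; ring, ha, hb]
  field_simp
  ring

end PowerSeries

theorem stmt_10 (m : ℕ) (hm : 2 ≤ m) (μ α β : ℝ) (hμ : 0 ≤ μ) (hα : 0 < α) (hβ : 0 < β) :
    0 < ∑ k ∈ Finset.Icc 1 (m - 1),
      (risingFactorial (μ + α) (2 * k) * risingFactorial (μ + β) (2 * (m - k))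
        - risingFactorial μ (2 * k) * risingFactorial (μ + α + β) (2 * (m - k))) /
        ((Nat.factorial (2 * k - 1) : ℝ) * (Nat.factorial (2 * (m - k) - 1) : ℝ)) := by
  simp only [sub_div, sum_sub_distrib, PowerSeries.sum_risingFactorial_mul_risingFactorial_div]
  have hP := PowerSeries.coeff_oddRisingSeries_mul_pos (c := μ + α + 1) (d := μ + β + 1)
    (by positivity) (by positivity) (n := 2 * m - 2) ⟨m - 1, by omega⟩ (by omega)
  have hQP := PowerSeries.coeff_oddRisingSeries_mul_le (ν := μ + 1) (by positivity) hα hβ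
    (2 * m - 2)
  rw [add_right_comm μ 1 α, add_right_comm μ 1 β, add_right_comm (μ + α) 1 β] at hQP
  nlinarith [mul_pos (mul_pos hα hβ) hP,
    mul_nonneg (mul_nonneg hμ (by positivity : 0 ≤ μ + α + β)) (sub_nonneg.mpr hQP)]
end

section
/- Let r ≥ 1 be an integer and {f_n}_{n≥0} an arbitrary nonnegative real sequence. Then for every μ > 0, every α, β > 0, and every integer m ≥ 0, Σ_{k=0}^{m} f_k f_{m−k} [ 1/( (μ+α)_{rk} (μ+β)_{r(m−k)} ) − 1/( (μ)_{rk} (μ+α+β)_{r(m−k)} ) ] ≤ 0. In other words, the formal power series μ ↦ Σ_{n≥0} f_n x^n/(μ)_{rn} is coefficient-wise log-convex. -/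
open Finset Polynomial

lemma Finset.sum_range_nonpos_of_add_reflect_nonpos {M : Type*} [AddCommMonoid M] [LinearOrder M]
    [IsOrderedCancelAddMonoid M] {g : ℕ → M} {m : ℕ} (h : ∀ k ≤ m, g k + g (m - k) ≤ 0) :
    ∑ k ∈ range (m + 1), g k ≤ 0 := by
  have hreflect : ∑ k ∈ range (m + 1), g (m - k) = ∑ k ∈ range (m + 1), g k := by
    simpa using sum_range_reflect g (m + 1)
  have hdouble : ∑ k ∈ range (m + 1), (g k + g (m - k)) ≤ 0 :=
    sum_nonpos fun k hk => h k (Nat.lt_succ_iff.mp (mem_range.mp hk))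
  rw [sum_add_distrib, hreflect] at hdouble
  by_contra! hpos
  exact (add_pos hpos hpos).not_ge hdouble

lemma inv_add_inv_le_inv_add_inv {p q s t : ℝ} (hp : 0 < p) (hq : 0 < q) (hs : 0 < s) (ht : 0 < t)
    (hmul : p * t ≤ q * s) (hadd : q + s ≤ p + t) : q⁻¹ + s⁻¹ ≤ p⁻¹ + t⁻¹ := by
  rw [inv_add_inv hq.ne' hs.ne', inv_add_inv hp.ne' ht.ne', div_le_div_iff₀ (by positivity)
    (by positivity)]
  exact mul_le_mul hadd hmul (by positivity) (by positivity)

lemma risingFactorial_eq_eval_ascPochhammer (x : ℝ) (n : ℕ) :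
    risingFactorial x n = (ascPochhammer ℝ n).eval x := by
  induction n with
  | zero => simp [risingFactorial]
  | succ n ih => rw [risingFactorial, ih, ascPochhammer_succ_eval]

lemma risingFactorial_pos_s12 {x : ℝ} (hx : 0 < x) (n : ℕ) : 0 < risingFactorial x n := by
  rw [risingFactorial_eq_eval_ascPochhammer]
  exact ascPochhammer_pos n x hx

lemma risingFactorial_add_s12 (x : ℝ) (a c : ℕ) :
    risingFactorial x (a + c) = risingFactorial x a * risingFactorial (x + a) c := by
  simp only [risingFactorial_eq_eval_ascPochhammer, ← ascPochhammer_mul, eval_mul, eval_comp,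
    eval_add, eval_X, eval_natCast]

lemma risingFactorial_mono {x y : ℝ} (hx : 0 < x) (hxy : x ≤ y) (n : ℕ) :
    risingFactorial x n ≤ risingFactorial y n := by
  induction n with
  | zero => rfl
  | succ n ih =>
    exact mul_le_mul ih (by linarith) (by positivity) ((risingFactorial_pos_s12 hx n).le.trans ih)

lemma risingFactorial_mul_le_mul_of_add_eq {x u v w : ℝ} (hx : 0 < x) (hu : x ≤ u) (hv : x ≤ v)
    (hw : u + v = x + w) (n : ℕ) :
    risingFactorial x n * risingFactorial w n ≤ risingFactorial u n * risingFactorial v n := by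
  induction n with
  | zero => simp [risingFactorial]
  | succ n ih =>
    have hfactor : (x + n) * (w + n) ≤ (u + n) * (v + n) := by
      nlinarith [mul_nonneg (sub_nonneg.2 hu) (sub_nonneg.2 hv)]
    have huv : 0 ≤ risingFactorial u n * risingFactorial v n :=
      (mul_pos (risingFactorial_pos_s12 (hx.trans_le hu) n) (risingFactorial_pos_s12 (hx.trans_le hv) n)).le
    have hxw : 0 ≤ (x + n) * (w + n) := mul_nonneg (by positivity) (by linarith)
    calc risingFactorial x (n + 1) * risingFactorial w (n + 1)
        = (risingFactorial x n * risingFactorial w n) * ((x + n) * (w + n)) := by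
          simp only [risingFactorial]; ring
      _ ≤ (risingFactorial u n * risingFactorial v n) * ((u + n) * (v + n)) :=
          mul_le_mul ih hfactor hxw huv
      _ = risingFactorial u (n + 1) * risingFactorial v (n + 1) := by
          simp only [risingFactorial]; ring

lemma risingFactorial_sub_le_sub_of_add_eq {x y u v : ℝ} (hx : 0 < x) (hxy : x ≤ y) (hxu : x ≤ u)
    (hv : u + y = x + v) (n : ℕ) :
    risingFactorial u n - risingFactorial x n ≤ risingFactorial v n - risingFactorial y n := by
  induction n with
  | zero => simp [risingFactorial]
  | succ n ih =>
    have hux : risingFactorial x n ≤ risingFactorial u n := risingFactorial_mono hx hxu n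
    have hvu : risingFactorial u n ≤ risingFactorial v n :=
      risingFactorial_mono (hx.trans_le hxu) (by linarith) n
    have hxn : 0 ≤ x + n := by positivity
    have hstep : (risingFactorial u n - risingFactorial x n) * (x + n)
        ≤ (risingFactorial v n - risingFactorial y n) * (y + n) :=
      mul_le_mul ih (by linarith) hxn ((sub_nonneg.2 hux).trans ih)
    have hlast : risingFactorial u n * (u - x) ≤ risingFactorial v n * (v - y) := by
      rw [show v - y = u - x by linarith]
      exact mul_le_mul_of_nonneg_right hvu (sub_nonneg.2 hxu)
    -- `(u)_{n+1} - (x)_{n+1} = ((u)_n - (x)_n) (x + n) + (u)_n (u - x)`, and likewise for `v, y`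
    simp only [risingFactorial]
    linarith

noncomputable def turanTerm (μ α β : ℝ) (a b : ℕ) : ℝ :=
  1 / (risingFactorial (μ + α) a * risingFactorial (μ + β) b)
    - 1 / (risingFactorial μ a * risingFactorial (μ + α + β) b)

lemma turanTerm_add_swap_nonpos {μ α β : ℝ} (hμ : 0 < μ) (hα : 0 ≤ α) (hβ : 0 ≤ β) (a b : ℕ) :
    turanTerm μ α β a b + turanTerm μ α β b a ≤ 0 := by
  wlog hab : a ≤ b generalizing a b
  · rw [add_comm]
    exact this b a (le_of_not_ge hab)
  obtain ⟨c, rfl⟩ := Nat.exists_eq_add_of_le hab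
  have hμa : 0 < μ + a := by positivity
  set A := risingFactorial (μ + α) a * risingFactorial (μ + β) a
  set C := risingFactorial μ a * risingFactorial (μ + α + β) a
  set p := risingFactorial (μ + a) c
  set q := risingFactorial (μ + α + a) c
  set s := risingFactorial (μ + β + a) c
  set t := risingFactorial (μ + α + β + a) c
  have hC : 0 < C := mul_pos (risingFactorial_pos_s12 hμ a) (risingFactorial_pos_s12 (by positivity) a)
  have hCA : C ≤ A :=
    risingFactorial_mul_le_mul_of_add_eq hμ (by linarith) (by linarith) (by ring) a
  have hpt : p * t ≤ q * s :=
    risingFactorial_mul_le_mul_of_add_eq hμa (by linarith) (by linarith) (by ring) c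
  have hqs : q + s ≤ p + t := by
    have := risingFactorial_sub_le_sub_of_add_eq (x := μ + a) (y := μ + β + a) (u := μ + α + a)
      (v := μ + α + β + a) hμa (by linarith) (by linarith) (by ring) c
    linarith
  have hsplit : turanTerm μ α β a (a + c) + turanTerm μ α β (a + c) a
      = A⁻¹ * (q⁻¹ + s⁻¹) - C⁻¹ * (p⁻¹ + t⁻¹) := by
    simp only [turanTerm, risingFactorial_add_s12, A, C, p, q, s, t]
    ring
  rw [hsplit, sub_nonpos]
  have hp : 0 < p := risingFactorial_pos_s12 hμa c
  have hq : 0 < q := risingFactorial_pos_s12 (by positivity) c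
  have hs : 0 < s := risingFactorial_pos_s12 (by positivity) c
  have ht : 0 < t := risingFactorial_pos_s12 (by positivity) c
  exact mul_le_mul (inv_anti₀ hC hCA) (inv_add_inv_le_inv_add_inv hp hq hs ht hpt hqs)
    (by positivity) (inv_nonneg.2 hC.le)

theorem stmt_12_general (r : ℕ) (f : ℕ → ℝ) (hf : ∀ n, 0 ≤ f n)
    (μ α β : ℝ) (hμ : 0 < μ) (hα : 0 < α) (hβ : 0 < β) (m : ℕ) :
    ∑ k ∈ Finset.range (m + 1), f k * f (m - k) *
      (1 / (risingFactorial (μ + α) (r * k) * risingFactorial (μ + β) (r * (m - k)))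
        - 1 / (risingFactorial μ (r * k) * risingFactorial (μ + α + β) (r * (m - k)))) ≤ 0 := by
  change ∑ k ∈ range (m + 1), f k * f (m - k) * turanTerm μ α β (r * k) (r * (m - k)) ≤ 0
  refine Finset.sum_range_nonpos_of_add_reflect_nonpos fun k hk => ?_
  rw [Nat.sub_sub_self hk, mul_comm (f (m - k)) (f k), ← mul_add]
  exact mul_nonpos_of_nonneg_of_nonpos (mul_nonneg (hf k) (hf (m - k)))
    (turanTerm_add_swap_nonpos hμ hα.le hβ.le _ _)

theorem stmt_12 (r : ℕ) (hr : 1 ≤ r) (f : ℕ → ℝ) (hf : ∀ n, 0 ≤ f n)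
    (μ α β : ℝ) (hμ : 0 < μ) (hα : 0 < α) (hβ : 0 < β) (m : ℕ) :
    ∑ k ∈ Finset.range (m + 1), f k * f (m - k) *
      (1 / (risingFactorial (μ + α) (r * k) * risingFactorial (μ + β) (r * (m - k)))
        - 1 / (risingFactorial μ (r * k) * risingFactorial (μ + α + β) (r * (m - k)))) ≤ 0 :=
  stmt_12_general r f hf μ α β hμ hα hβ m
end

section
/- Let m ≥ 2 be an integer, μ ≥ 0 and α, β > 0 real numbers, and k = ⌊m/2⌋. If m = 2k, then (μ+α)_{2k}(μ+β)_{2k} − (μ)_{2k}(μ+α+β)_{2k} > 0. If m = 2k+1, then (μ+α)_{2k}(μ+β)_{2k+2} + (μ+α)_{2k+2}(μ+β)_{2k} − (μ)_{2k}(μ+α+β)_{2k+2} − (μ)_{2k+2}(μ+α+β)_{2k} > 0. (This is the positivity of the last Gauss-paired Turánian term Ã_{⌊m/2⌋}, which together with the sign-change and negativity facts established earlier shows that the sequence A_0, …, A_{⌊m/2⌋} has exactly one change of sign.) -/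
/-!
Everything reduces to the factorwise inequality `x (x + α + β) < (x + α) (x + β)`, whose gap is
exactly `αβ`. Multiplying it over the factors gives `(μ)ₙ (μ+α+β)ₙ < (μ+α)ₙ (μ+β)ₙ`, which is the
even case. In the odd case write `X = (μ+α)ₚ (μ+β)ₚ`, `Y = (μ)ₚ (μ+α+β)ₚ` with `p = n + 1` and peel
off the two extra factors: the expression becomes `X f - Y (f + 2αβ)`, where `f` is the sum of the
two extra factor pairs of `(μ+α)` and `(μ+β)`. Applying the inequality at level `n` and keeping
the last factors gives `X b ≥ Y (b + αβ)` with `b = (μ+n)(μ+α+β+n)`; moreover `f > 2b`, so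
`X f - Y (f + 2αβ) = (X - Y)(f - 2b) + 2 (X b - Y (b + αβ)) > 0`.
-/

namespace risingFactorial

theorem succ (x : ℝ) (n : ℕ) : risingFactorial x (n + 1) = risingFactorial x n * (x + n) := rfl

theorem add_two (x : ℝ) (n : ℕ) :
    risingFactorial x (n + 2) = risingFactorial x n * ((x + n) * (x + n + 1)) := by
  rw [succ, succ]
  push_cast
  ring

theorem nonneg {x : ℝ} (hx : 0 ≤ x) (n : ℕ) : 0 ≤ risingFactorial x n := by
  induction n with
  | zero => exact zero_le_one
  | succ n ih => rw [succ]; positivity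

theorem pos {x : ℝ} (hx : 0 < x) (n : ℕ) : 0 < risingFactorial x n := by
  induction n with
  | zero => exact zero_lt_one
  | succ n ih => rw [succ]; positivity

variable {μ α β : ℝ}

theorem mul_le_mul_shift (hμ : 0 ≤ μ) (hα : 0 ≤ α) (hβ : 0 ≤ β) (n : ℕ) :
    risingFactorial μ n * risingFactorial (μ + α + β) n
      ≤ risingFactorial (μ + α) n * risingFactorial (μ + β) n := by
  induction n with
  | zero => rfl
  | succ n ih =>
    have hfactor : (μ + n) * (μ + α + β + n) ≤ (μ + α + n) * (μ + β + n) := by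
      nlinarith [mul_nonneg hα hβ]
    calc risingFactorial μ (n + 1) * risingFactorial (μ + α + β) (n + 1)
        = risingFactorial μ n * risingFactorial (μ + α + β) n
            * ((μ + n) * (μ + α + β + n)) := by rw [succ, succ]; ring
      _ ≤ risingFactorial (μ + α) n * risingFactorial (μ + β) n
            * ((μ + α + n) * (μ + β + n)) :=
        mul_le_mul ih hfactor (by positivity)
          (mul_nonneg (nonneg (by positivity) n) (nonneg (by positivity) n))
      _ = risingFactorial (μ + α) (n + 1) * risingFactorial (μ + β) (n + 1) := by
        rw [succ, succ]; ring

theorem mul_lt_mul_shift (hμ : 0 ≤ μ) (hα : 0 < α) (hβ : 0 < β) {n : ℕ} (hn : 0 < n) :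
    risingFactorial μ n * risingFactorial (μ + α + β) n
      < risingFactorial (μ + α) n * risingFactorial (μ + β) n := by
  obtain ⟨n, rfl⟩ : ∃ j, n = j + 1 := ⟨n - 1, by omega⟩
  have hfactor : (μ + n) * (μ + α + β + n) < (μ + α + n) * (μ + β + n) := by
    nlinarith [mul_pos hα hβ]
  calc risingFactorial μ (n + 1) * risingFactorial (μ + α + β) (n + 1)
      = risingFactorial μ n * risingFactorial (μ + α + β) n
          * ((μ + n) * (μ + α + β + n)) := by rw [succ, succ]; ring
    _ < risingFactorial (μ + α) n * risingFactorial (μ + β) n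
          * ((μ + α + n) * (μ + β + n)) :=
      mul_lt_mul_of_le_of_lt_of_nonneg_of_pos (mul_le_mul_shift hμ hα.le hβ.le n) hfactor
        (by positivity) (mul_pos (pos (by positivity) n) (pos (by positivity) n))
    _ = risingFactorial (μ + α) (n + 1) * risingFactorial (μ + β) (n + 1) := by
      rw [succ, succ]; ring

theorem cross_sum_pos (hμ : 0 ≤ μ) (hα : 0 < α) (hβ : 0 < β) {p : ℕ} (hp : 0 < p) :
    0 < risingFactorial (μ + α) p * risingFactorial (μ + β) (p + 2)
      + risingFactorial (μ + α) (p + 2) * risingFactorial (μ + β) p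
      - risingFactorial μ p * risingFactorial (μ + α + β) (p + 2)
      - risingFactorial μ (p + 2) * risingFactorial (μ + α + β) p := by
  obtain ⟨n, rfl⟩ : ∃ j, p = j + 1 := ⟨p - 1, by omega⟩
  set X := risingFactorial (μ + α) (n + 1) * risingFactorial (μ + β) (n + 1)
  set Y := risingFactorial μ (n + 1) * risingFactorial (μ + α + β) (n + 1)
  have hXY : Y < X := mul_lt_mul_shift hμ hα hβ n.succ_pos
  have hcross : Y * ((μ + α + n) * (μ + β + n)) ≤ X * ((μ + n) * (μ + α + β + n)) := by
    calc Y * ((μ + α + n) * (μ + β + n))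
        = risingFactorial μ n * risingFactorial (μ + α + β) n
            * ((μ + n) * (μ + α + β + n) * ((μ + α + n) * (μ + β + n))) := by
          simp only [Y, succ]; ring
      _ ≤ risingFactorial (μ + α) n * risingFactorial (μ + β) n
            * ((μ + n) * (μ + α + β + n) * ((μ + α + n) * (μ + β + n))) := by
          gcongr ?_ * _
          exact mul_le_mul_shift hμ hα.le hβ.le n
      _ = X * ((μ + n) * (μ + α + β + n)) := by simp only [X, succ]; ring
  have hgap : 2 * ((μ + n) * (μ + α + β + n))
      < (μ + α + n + 1) * (μ + α + n + 2) + (μ + β + n + 1) * (μ + β + n + 2) := by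
    nlinarith [sq_nonneg α, sq_nonneg β]
  simp only [add_two]
  push_cast
  linear_combination mul_pos (sub_pos.2 hXY) (sub_pos.2 hgap) + 2 * hcross

end risingFactorial

theorem stmt_17_general (m : ℕ) (hm : 2 ≤ m) (μ α β : ℝ) (hμ : 0 ≤ μ) (hα : 0 < α) (hβ : 0 < β)
    (k : ℕ) :
    (m = 2 * k →
      0 < risingFactorial (μ + α) (2 * k) * risingFactorial (μ + β) (2 * k)
        - risingFactorial μ (2 * k) * risingFactorial (μ + α + β) (2 * k)) ∧
    (m = 2 * k + 1 →
      0 < risingFactorial (μ + α) (2 * k) * risingFactorial (μ + β) (2 * k + 2)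
        + risingFactorial (μ + α) (2 * k + 2) * risingFactorial (μ + β) (2 * k)
        - risingFactorial μ (2 * k) * risingFactorial (μ + α + β) (2 * k + 2)
        - risingFactorial μ (2 * k + 2) * risingFactorial (μ + α + β) (2 * k)) := by
  exact ⟨fun _ => sub_pos.2 (risingFactorial.mul_lt_mul_shift hμ hα hβ (by omega)),
    fun _ => risingFactorial.cross_sum_pos hμ hα hβ (by omega)⟩

theorem stmt_17 (m : ℕ) (hm : 2 ≤ m) (μ α β : ℝ) (hμ : 0 ≤ μ) (hα : 0 < α) (hβ : 0 < β)
    (k : ℕ) (hk : k = m / 2) :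
    (m = 2 * k →
      0 < risingFactorial (μ + α) (2 * k) * risingFactorial (μ + β) (2 * k)
        - risingFactorial μ (2 * k) * risingFactorial (μ + α + β) (2 * k)) ∧
    (m = 2 * k + 1 →
      0 < risingFactorial (μ + α) (2 * k) * risingFactorial (μ + β) (2 * k + 2)
        + risingFactorial (μ + α) (2 * k + 2) * risingFactorial (μ + β) (2 * k)
        - risingFactorial μ (2 * k) * risingFactorial (μ + α + β) (2 * k + 2)
        - risingFactorial μ (2 * k + 2) * risingFactorial (μ + α + β) (2 * k)) :=
  stmt_17_general m hm μ α β hμ hα hβ k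
end

section
/- Let q ≥ 1 and 0 ≤ r ≤ q be integers, and let a_1, …, a_{q−r} > 0 and b_1, …, b_q > 0 be real numbers satisfying the chain of inequalities e_{r+i}(b_1,…,b_q) · e_{i−1}(a_1,…,a_{q−r}) ≤ e_{r+i−1}(b_1,…,b_q) · e_i(a_1,…,a_{q−r}) for i = 1, …, q−r, together with e_{r+1}(b_1,…,b_q) ≤ e_r(b_1,…,b_q) · e_1(a_1,…,a_{q−r}) when r < q (i.e., the chain e_q(b)/e_{q−r}(a) ≤ e_{q−1}(b)/e_{q−r−1}(a) ≤ ⋯ ≤ e_{r+1}(b)/e_1(a) ≤ e_r(b)). Then the sequence f_n = (a_1)_n ⋯ (a_{q−r})_n / ( (b_1)_n ⋯ (b_q)_n ), n ≥ 0 (with numerator equal to 1 when r = q), is log-concave: 0 < f_{n−1} f_{n+1} ≤ f_n^2 for every n ≥ 1. -/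
/-- The `k`-th elementary symmetric polynomial of `x_1, …, x_n`. -/
noncomputable def esymm {n : ℕ} (x : Fin n → ℝ) (k : ℕ) : ℝ :=
  ∑ s ∈ Finset.powersetCard k (Finset.univ : Finset (Fin n)), ∏ i ∈ s, x i

/-- The sequence of hypergeometric terms
`f_n = (a_1)_n ⋯ (a_{q−r})_n / ((b_1)_n ⋯ (b_q)_n)`. -/
noncomputable def hypTerm {p q : ℕ} (a : Fin p → ℝ) (b : Fin q → ℝ) (n : ℕ) : ℝ :=
  (∏ j, risingFactorial (a j) n) / (∏ j, risingFactorial (b j) n)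

/-!
Write `P(t) = ∏ (a_j + t)` and `Q(t) = ∏ (b_j + t)`, so that `f_{n+1} = f_n · P(n) / Q(n)`;
log-concavity of the positive sequence `f` follows once `P / Q` is nonincreasing on `[0, ∞)`.
By Vieta the coefficients of `t^k` are `A_k = e_{q-r-k}(a)` and `B_k = e_{q-k}(b)`, and the
hypothesised chain says exactly that `A_k / B_k` decreases in `k`. For `0 ≤ x ≤ y`,
`P(x) Q(y) - P(y) Q(x) = ∑_{k < m} (A_k B_m - A_m B_k) (x^k y^m - x^m y^k)`,
and both factors of every term are nonnegative.
-/

open Finset Polynomial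

lemma pow_mul_pow_le_pow_mul_pow {x y : ℝ} (hx : 0 ≤ x) (hxy : x ≤ y) {k m : ℕ} (hkm : k ≤ m) :
    x ^ m * y ^ k ≤ x ^ k * y ^ m := by
  obtain ⟨d, rfl⟩ := Nat.exists_eq_add_of_le hkm
  calc x ^ (k + d) * y ^ k = x ^ k * y ^ k * x ^ d := by ring
    _ ≤ x ^ k * y ^ k * y ^ d :=
      mul_le_mul_of_nonneg_left (pow_le_pow_left₀ hx hxy d) (by positivity [hx.trans hxy])
    _ = x ^ k * y ^ (k + d) := by ring

lemma sum_mul_sum_le_of_cross {A B : ℕ → ℝ} (s : Finset ℕ)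
    (hAB : ∀ k m, k ≤ m → A m * B k ≤ A k * B m) {x y : ℝ} (hx : 0 ≤ x) (hxy : x ≤ y) :
    (∑ k ∈ s, A k * y ^ k) * ∑ k ∈ s, B k * x ^ k ≤
      (∑ k ∈ s, A k * x ^ k) * ∑ k ∈ s, B k * y ^ k := by
  set G : ℕ → ℕ → ℝ := fun k m => A k * B m * (x ^ k * y ^ m - y ^ k * x ^ m)
  have hdiff : (∑ k ∈ s, A k * x ^ k) * (∑ k ∈ s, B k * y ^ k) -
      (∑ k ∈ s, A k * y ^ k) * (∑ k ∈ s, B k * x ^ k) = ∑ k ∈ s, ∑ m ∈ s, G k m := by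
    simp only [G, sum_mul_sum, ← sum_sub_distrib]
    exact sum_congr rfl fun k _ => sum_congr rfl fun m _ => by ring
  have hsymm : 2 * ∑ k ∈ s, ∑ m ∈ s, G k m = ∑ k ∈ s, ∑ m ∈ s, (G k m + G m k) := by
    simp only [sum_add_distrib]
    rw [sum_comm (f := fun k m => G m k)]
    ring
  have hpair : ∀ k m, 0 ≤ G k m + G m k := by
    intro k m
    have hG : G k m + G m k = (A k * B m - A m * B k) * (x ^ k * y ^ m - x ^ m * y ^ k) := by
      simp only [G]; ring
    rcases le_total k m with hkm | hmk
    · exact hG ▸ mul_nonneg (sub_nonneg.2 (hAB k m hkm))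
        (sub_nonneg.2 (pow_mul_pow_le_pow_mul_pow hx hxy hkm))
    · exact hG ▸ mul_nonneg_of_nonpos_of_nonpos (sub_nonpos.2 (hAB m k hmk))
        (sub_nonpos.2 (pow_mul_pow_le_pow_mul_pow hx hxy hmk))
  have := sum_nonneg fun k (_ : k ∈ s) => sum_nonneg fun m (_ : m ∈ s) => hpair k m
  linarith

lemma eval_mul_eval_le_of_coeff_cross {P Q : ℝ[X]}
    (hPQ : ∀ k m, k ≤ m → P.coeff m * Q.coeff k ≤ P.coeff k * Q.coeff m)
    {x y : ℝ} (hx : 0 ≤ x) (hxy : x ≤ y) : P.eval y * Q.eval x ≤ P.eval x * Q.eval y := by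
  have hP : P.natDegree < max P.natDegree Q.natDegree + 1 := by omega
  have hQ : Q.natDegree < max P.natDegree Q.natDegree + 1 := by omega
  simp only [eval_eq_sum_range' hP, eval_eq_sum_range' hQ]
  exact sum_mul_sum_le_of_cross _ hPQ hx hxy

lemma mul_le_mul_of_succ_mul_le {c d : ℕ → ℝ} {N : ℕ} (hc : ∀ i ≤ N, 0 < c i)
    (h : ∀ i < N, d (i + 1) * c i ≤ d i * c (i + 1)) {u v : ℕ} (huv : u ≤ v) (hv : v ≤ N) :
    d v * c u ≤ d u * c v := by
  have hratio : d v / c v ≤ d u / c u := by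
    induction v, huv using Nat.le_induction with
    | base => exact le_rfl
    | succ v huv ih =>
      refine le_trans ?_ (ih (by omega))
      exact (div_le_div_iff₀ (hc _ hv) (hc v (by omega))).2 (h v hv)
  rwa [div_le_div_iff₀ (hc v hv) (hc u (huv.trans hv))] at hratio

lemma mul_le_sq_of_ratio_le {f ρ : ℕ → ℝ} (hf : ∀ n, 0 ≤ f n)
    (hρ : ∀ n, f (n + 1) = f n * ρ n) {n : ℕ} (hn : ρ (n + 1) ≤ ρ n) :
    f n * f (n + 2) ≤ f (n + 1) ^ 2 :=
  calc f n * f (n + 2) = f n * f (n + 1) * ρ (n + 1) := by rw [hρ (n + 1)]; ring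
    _ ≤ f n * f (n + 1) * ρ n := mul_le_mul_of_nonneg_left hn (mul_nonneg (hf n) (hf (n + 1)))
    _ = f (n + 1) ^ 2 := by rw [hρ n]; ring

lemma esymm_nonneg {n : ℕ} {x : Fin n → ℝ} (hx : ∀ j, 0 ≤ x j) (k : ℕ) : 0 ≤ esymm x k :=
  sum_nonneg fun _ _ => prod_nonneg fun i _ => hx i

lemma esymm_pos {n : ℕ} {x : Fin n → ℝ} (hx : ∀ j, 0 < x j) {k : ℕ} (hk : k ≤ n) :
    0 < esymm x k :=
  sum_pos (fun _ _ => prod_pos fun i _ => hx i) (powersetCard_nonempty.2 (by simpa using hk))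

noncomputable def prodXAddC {n : ℕ} (x : Fin n → ℝ) : ℝ[X] := ∏ j, (X + C (x j))

lemma eval_prodXAddC {n : ℕ} (x : Fin n → ℝ) (t : ℝ) :
    (prodXAddC x).eval t = ∏ j, (x j + t) := by
  simp [prodXAddC, eval_prod, add_comm]

lemma coeff_prodXAddC {n : ℕ} (x : Fin n → ℝ) {k : ℕ} (hk : k ≤ n) :
    (prodXAddC x).coeff k = esymm x (n - k) := by
  rw [prodXAddC, Finset.prod_X_add_C_coeff _ _ (by simpa using hk)]
  simp [esymm]

lemma coeff_prodXAddC_of_lt {n : ℕ} (x : Fin n → ℝ) {k : ℕ} (hk : n < k) :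
    (prodXAddC x).coeff k = 0 := by
  refine coeff_eq_zero_of_natDegree_lt (lt_of_le_of_lt ?_ hk)
  exact (natDegree_prod_le _ _).trans (by simp)

lemma coeff_prodXAddC_nonneg {n : ℕ} {x : Fin n → ℝ} (hx : ∀ j, 0 ≤ x j) (k : ℕ) :
    0 ≤ (prodXAddC x).coeff k := by
  rcases le_or_gt k n with hk | hk
  · exact coeff_prodXAddC x hk ▸ esymm_nonneg hx _
  · exact (coeff_prodXAddC_of_lt x hk).ge

lemma coeff_prodXAddC_cross {p q r : ℕ} (hpq : r + p = q) {a : Fin p → ℝ} {b : Fin q → ℝ}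
    (ha : ∀ j, 0 < a j) (hb : ∀ j, 0 ≤ b j)
    (hchain : ∀ i : ℕ, 1 ≤ i → i ≤ p →
      esymm b (r + i) * esymm a (i - 1) ≤ esymm b (r + i - 1) * esymm a i)
    ⦃k m : ℕ⦄ (hkm : k ≤ m) :
    (prodXAddC a).coeff m * (prodXAddC b).coeff k ≤
      (prodXAddC a).coeff k * (prodXAddC b).coeff m := by
  rcases le_or_gt m p with hm | hm
  · rw [coeff_prodXAddC a hm, coeff_prodXAddC a (hkm.trans hm), coeff_prodXAddC b (by omega),
      coeff_prodXAddC b (by omega), show q - k = r + (p - k) by omega,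
      show q - m = r + (p - m) by omega]
    have := mul_le_mul_of_succ_mul_le (c := esymm a) (d := fun i => esymm b (r + i))
      (fun i hi => esymm_pos ha hi) (fun i hi => by simpa using hchain (i + 1) (by omega) hi)
      (u := p - m) (v := p - k) (by omega) (by omega)
    linarith
  · rw [coeff_prodXAddC_of_lt a hm, zero_mul]
    exact mul_nonneg (coeff_prodXAddC_nonneg (fun j => (ha j).le) k)
      (coeff_prodXAddC_nonneg hb m)

lemma risingFactorial_pos_s19 {μ : ℝ} (hμ : 0 < μ) : ∀ n, 0 < risingFactorial μ n
  | 0 => one_pos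
  | n + 1 => mul_pos (risingFactorial_pos_s19 hμ n) (by positivity)

lemma hypTerm_pos {p q : ℕ} {a : Fin p → ℝ} {b : Fin q → ℝ} (ha : ∀ j, 0 < a j)
    (hb : ∀ j, 0 < b j) (n : ℕ) : 0 < hypTerm a b n :=
  div_pos (prod_pos fun j _ => risingFactorial_pos_s19 (ha j) n)
    (prod_pos fun j _ => risingFactorial_pos_s19 (hb j) n)

lemma hypTerm_succ {p q : ℕ} (a : Fin p → ℝ) (b : Fin q → ℝ) (n : ℕ) :
    hypTerm a b (n + 1) = hypTerm a b n * ((∏ j, (a j + n)) / ∏ j, (b j + n)) := by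
  simp only [hypTerm, risingFactorial, prod_mul_distrib, mul_div_mul_comm]

theorem stmt_19_general (q r : ℕ) (hr : r ≤ q)
    (a : Fin (q - r) → ℝ) (b : Fin q → ℝ)
    (ha : ∀ j, 0 < a j) (hb : ∀ j, 0 < b j)
    (hchain : ∀ i : ℕ, 1 ≤ i → i ≤ q - r →
      esymm b (r + i) * esymm a (i - 1) ≤ esymm b (r + i - 1) * esymm a i) :
    ∀ n : ℕ, 1 ≤ n →
      0 < hypTerm a b (n - 1) * hypTerm a b (n + 1) ∧
      hypTerm a b (n - 1) * hypTerm a b (n + 1) ≤ (hypTerm a b n) ^ 2 := by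
  intro n hn
  obtain ⟨n, rfl⟩ := Nat.exists_eq_add_of_le' hn
  have hf := hypTerm_pos ha hb
  rw [Nat.add_sub_cancel]
  refine ⟨mul_pos (hf _) (hf _), ?_⟩
  refine mul_le_sq_of_ratio_le (fun k => (hf k).le) (hypTerm_succ a b) ?_
  have hcross := coeff_prodXAddC_cross (Nat.add_sub_cancel' hr) ha (fun j => (hb j).le) hchain
  have hb_pos : ∀ t : ℝ, 0 ≤ t → 0 < ∏ j, (b j + t) :=
    fun t ht => prod_pos fun j _ => add_pos_of_pos_of_nonneg (hb j) ht
  rw [div_le_div_iff₀ (hb_pos _ (by positivity)) (hb_pos _ (by positivity)),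
    ← eval_prodXAddC, ← eval_prodXAddC, ← eval_prodXAddC, ← eval_prodXAddC]
  exact eval_mul_eval_le_of_coeff_cross hcross (Nat.cast_nonneg n) (by push_cast; linarith)

theorem stmt_19 (q r : ℕ) (hq : 1 ≤ q) (hr : r ≤ q)
    (a : Fin (q - r) → ℝ) (b : Fin q → ℝ)
    (ha : ∀ j, 0 < a j) (hb : ∀ j, 0 < b j)
    (hchain : ∀ i : ℕ, 1 ≤ i → i ≤ q - r →
      esymm b (r + i) * esymm a (i - 1) ≤ esymm b (r + i - 1) * esymm a i)
    (hlast : r < q → esymm b (r + 1) ≤ esymm b r * esymm a 1) :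
    ∀ n : ℕ, 1 ≤ n →
      0 < hypTerm a b (n - 1) * hypTerm a b (n + 1) ∧
      hypTerm a b (n - 1) * hypTerm a b (n + 1) ≤ (hypTerm a b n) ^ 2 :=
  stmt_19_general q r hr a b ha hb hchain
end
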